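/- arXiv:0712.0489 — 2 statements merged into one kernel-verified Lean document; each statement's English description precedes it below -/
import Mathlib

section
/- For every integer g ≥ 1 there exist an infinite, connected graph G = (V,E) with finite maximal degree, a root o ∈ V such that G is (g,o)-growing, and constants β₀ > 0 and θ > 0 such that for every β ≥ β₀ and all sufficiently large r, the heat-bath Glauber dynamics at inverse temperature β and zero external field on the ball B_r with free boundary condition (i.e. with stationary Gibbs measure on {−1,+1}^{B_r} proportional to exp(β Σ_{(x,y)∈E(B_r)} σ_x σ_y), the sum over edges with both endpoints in B_r) has spectral gap at most e^{−θ n}, where n = |B_r|. -/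
/- Common framework: Ising model with boundary conditions on (finite pieces of)
   locally finite graphs, heat-bath Glauber dynamics quantities. -/

open Finset
open scoped Classical

noncomputable section

namespace IsingGlauber

/-- The real spin value of a Boolean spin: `true ↦ +1`, `false ↦ -1`. -/
def spin (b : Bool) : ℝ := if b then 1 else -1

variable {V : Type*}

/-- Neighbourhood finset of a vertex, from an explicit local finiteness witness. -/
def nbr (G : SimpleGraph V) (hlf : G.LocallyFinite) (x : V) : Finset V :=
  @SimpleGraph.neighborFinset V G x (hlf x)

/-- `G` is `(g,o)`-growing: every vertex `x` (say at distance `r` from `o`) has at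
    least `g` more neighbours in level `r+1` than in the ball of radius `r`. -/
def IsGrowing (G : SimpleGraph V) (hlf : G.LocallyFinite) (g : ℕ) (o : V) : Prop :=
  ∀ x : V,
    ((nbr G hlf x).filter fun z => G.dist o z ≤ G.dist o x).card + g ≤
      ((nbr G hlf x).filter fun z => G.dist o z = G.dist o x + 1).card

variable [DecidableEq V]

/-- External vertex boundary of a finite vertex set. -/
def vbd (G : SimpleGraph V) (hlf : G.LocallyFinite) (A : Finset V) : Finset V :=
  A.biUnion (fun a => nbr G hlf a) \ A

/-- Closure `A ∪ ∂_V A` of a finite vertex set. -/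
def cl (G : SimpleGraph V) (hlf : G.LocallyFinite) (A : Finset V) : Finset V :=
  A ∪ vbd G hlf A

/-- Ising Hamiltonian (zero field) with boundary: `Σ_{(x,y) ∈ E(A ∪ ∂_V A)} σ_x σ_y`,
    the sum over edges with both endpoints in `A ∪ ∂_V A` (each edge counted once). -/
def energyB (G : SimpleGraph V) (hlf : G.LocallyFinite) (A : Finset V) (σ : V → Bool) : ℝ :=
  (1 / 2) * ∑ x ∈ cl G hlf A, ∑ y ∈ (cl G hlf A).filter (fun y => G.Adj x y),
    spin (σ x) * spin (σ y)

/-- Free-boundary Ising Hamiltonian: `Σ_{(x,y) ∈ E(A)} σ_x σ_y`,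
    the sum over edges with both endpoints in `A` (each edge counted once). -/
def energyF (G : SimpleGraph V) (A : Finset V) (σ : V → Bool) : ℝ :=
  (1 / 2) * ∑ x ∈ A, ∑ y ∈ A.filter (fun y => G.Adj x y), spin (σ x) * spin (σ y)

/-- The configuration equal to `p` on `A` and to `η` off `A`. -/
def patch (A : Finset V) (η : V → Bool) (p : ∀ a ∈ A, Bool) : V → Bool :=
  fun v => if h : v ∈ A then p v h else η v

/-- Unnormalised Gibbs sum over configurations agreeing with `η` off `A`,
    with energy functional `E` (which should already include the factor `β`). -/
def wsum (E : (V → Bool) → ℝ) (A : Finset V) (η : V → Bool) (f : (V → Bool) → ℝ) : ℝ :=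
  ∑ p ∈ A.pi (fun _ => (Finset.univ : Finset Bool)),
    Real.exp (E (patch A η p)) * f (patch A η p)

/-- Gibbs expectation of `f` for the measure on region `A` with boundary condition `η`. -/
def gExp (E : (V → Bool) → ℝ) (A : Finset V) (η : V → Bool) (f : (V → Bool) → ℝ) : ℝ :=
  wsum E A η f / wsum E A η (fun _ => 1)

/-- Gibbs probability of an event. -/
def gProb (E : (V → Bool) → ℝ) (A : Finset V) (η : V → Bool) (P : (V → Bool) → Prop) : ℝ :=
  gExp E A η (fun σ => if P σ then 1 else 0)

/-- Gibbs variance of `f`. -/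
def gVar (E : (V → Bool) → ℝ) (A : Finset V) (η : V → Bool) (f : (V → Bool) → ℝ) : ℝ :=
  gExp E A η (fun σ => f σ ^ 2) - gExp E A η f ^ 2

/-- Dirichlet form of the heat-bath Glauber dynamics:
    `D(f) = Σ_{x ∈ A} μ(Var_x(f))`, where `Var_x(f)(σ)` is the variance of `f`
    under the one-site conditional Gibbs measure at `x` given `σ` elsewhere. -/
def dirich (E : (V → Bool) → ℝ) (A : Finset V) (η : V → Bool) (f : (V → Bool) → ℝ) : ℝ :=
  ∑ x ∈ A, gExp E A η (fun σ => gVar E {x} σ f)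

/-- Spectral gap `c_gap(μ) = inf { D(f)/Var(f) : Var(f) ≠ 0 }`. -/
def cgap (E : (V → Bool) → ℝ) (A : Finset V) (η : V → Bool) : ℝ :=
  sInf {r : ℝ | ∃ f : (V → Bool) → ℝ, gVar E A η f ≠ 0 ∧ r = dirich E A η f / gVar E A η f}

/-- The edge boundary of `C`, encoded as ordered pairs `(u,v)` with `u ∈ C`,
    `v ∉ C` and `u ~ v`; these pairs are in bijection with the boundary edges. -/
def obd (G : SimpleGraph V) (hlf : G.LocallyFinite) (C : Finset V) : Finset (V × V) :=
  (C ×ˢ C.biUnion (fun c => nbr G hlf c)).filter (fun p => G.Adj p.1 p.2 ∧ p.2 ∉ C)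

end IsingGlauber

open IsingGlauber

/-!
The graph is a `K`-ary tree, `K = 2g + 10`, in which every level additionally carries the edges
of four permutations making it an expander; such permutations exist by a union bound over
independent uniform permutations. A vertex has `K` children but at most nine other neighbours,
so the graph is `(g, root)`-growing, and the last level of a ball holds at least `11/12` of
its vertices.

The test function is the indicator that the majority of the spins in `B_r` is `+`. As `|B_r|`
is odd, spin-flip symmetry gives it variance `1/4`. A single spin flip changes the majority only
when the magnetisation is `±1`, so `D(f) ≤ n/4 · μ(|m| ≤ 1)`. In such a near-tie the last level is
split in proportions between `2/5` and `3/5`, so its expander edges carry at least `n/400`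
disagreeing pairs, and the Peierls bound `μ(|m| ≤ 1) ≤ 2ⁿ e^{-βn/400}` is below `e^{-n}/n`
once `β ≥ 1200`.
-/

open Equiv

lemma choose_div_hundred_le (s : ℕ) (hs : 100 ≤ s) :
    s.choose (s / 100) ≤ 2 ^ (10 * (s / 100)) := by
  set m := s / 100
  have hm : (0 : ℝ) < m := by exact_mod_cast Nat.div_pos hs (by norm_num)
  have hsm : (s : ℝ) ≤ 200 * m := by exact_mod_cast (by omega : s ≤ 200 * m)
  have hexp : (m : ℝ) ^ m / m.factorial ≤ Real.exp 1 ^ m := by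
    rw [← Real.exp_nat_mul, mul_one]; exact Real.pow_div_factorial_le_exp _ hm.le m
  have hchoose : (s.choose m : ℝ) ≤ 1024 ^ m := calc
    (s.choose m : ℝ) ≤ (s : ℝ) ^ m / m.factorial := Nat.choose_le_pow_div m s
    _ ≤ (200 * m : ℝ) ^ m / m.factorial := by gcongr
    _ = 200 ^ m * ((m : ℝ) ^ m / m.factorial) := by rw [mul_pow, mul_div_assoc]
    _ ≤ 200 ^ m * Real.exp 1 ^ m := by gcongr
    _ = (200 * Real.exp 1) ^ m := (mul_pow _ _ _).symm
    _ ≤ 1024 ^ m := by gcongr; linarith [Real.exp_one_lt_d9]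
  rw [pow_mul]; exact_mod_cast hchoose

lemma two_pow_mul_descFactorial_le {s L : ℕ} (h : 2 * s ≤ L) (k : ℕ) :
    2 ^ k * s.descFactorial k ≤ L.descFactorial k := by
  induction k with
  | zero => simp
  | succ k ih =>
    rw [Nat.descFactorial_succ, Nat.descFactorial_succ, pow_succ]
    calc 2 ^ k * 2 * ((s - k) * s.descFactorial k)
        = (2 * (s - k)) * (2 ^ k * s.descFactorial k) := by ring
      _ ≤ (L - k) * L.descFactorial k := Nat.mul_le_mul (by omega) ih

section Expander

variable {α : Type*} [Fintype α] [DecidableEq α]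

lemma card_perm_eqOn_le (π₀ : Perm α) (A : Finset α) :
    #{π : Perm α | ∀ a ∈ A, π a = π₀ a} ≤ (Fintype.card α - #A).factorial := by
  have hfix : Fintype.card {σ : Perm α // ∀ a, ¬ a ∉ A → σ a = a}
      = (Fintype.card α - #A).factorial := by
    rw [← Fintype.card_congr (Perm.subtypeEquivSubtypePerm (· ∉ A)), Fintype.card_perm,
      Fintype.card_subtype, filter_not, filter_mem_eq_inter, univ_inter,
      card_sdiff_of_subset (subset_univ A), card_univ]
  rw [← hfix, ← Fintype.card_subtype]
  refine Fintype.card_le_of_injective (fun π => ⟨π₀⁻¹ * π.1, fun a ha => ?_⟩) fun π π' h => ?_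
  · simp [π.2 a (not_not.1 ha)]
  · exact Subtype.ext (mul_left_cancel (congrArg Subtype.val h))

lemma card_perm_mapsTo_le (A T : Finset α) :
    #{π : Perm α | ∀ a ∈ A, π a ∈ T}
      ≤ (#T).descFactorial #A * (Fintype.card α - #A).factorial := by
  set S := ({π : Perm α | ∀ a ∈ A, π a ∈ T} : Finset _)
  let restrict : Perm α → (A → α) := fun π a => π a
  have hfibre : ∀ f ∈ S.image restrict, #{π ∈ S | restrict π = f}
      ≤ (Fintype.card α - #A).factorial := by
    rintro f hf
    obtain ⟨π₀, -, rfl⟩ := mem_image.1 hf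
    refine (card_le_card fun π hπ => ?_).trans (card_perm_eqOn_le π₀ A)
    simp only [mem_filter, mem_univ, true_and] at hπ ⊢
    exact fun a ha => congrFun hπ.2 ⟨a, ha⟩
  have himage : S.image restrict ⊆ (univ : Finset (A ↪ T)).image fun e a => e a := by
    intro f hf
    obtain ⟨π, hπ, rfl⟩ := mem_image.1 hf
    refine mem_image.2 ⟨⟨fun a => ⟨π a, (mem_filter.1 hπ).2 a a.2⟩, fun a b h => ?_⟩,
      mem_univ _, rfl⟩
    exact Subtype.ext (π.injective (congrArg Subtype.val h))
  calc #S ≤ (Fintype.card α - #A).factorial * #(S.image restrict) :=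
        card_le_mul_card_image S _ hfibre
    _ ≤ (Fintype.card α - #A).factorial * #(univ : Finset (A ↪ T)) :=
        Nat.mul_le_mul_left _ ((card_le_card himage).trans card_image_le)
    _ = _ := by
        rw [card_univ, Fintype.card_embedding_eq, Fintype.card_coe, Fintype.card_coe, mul_comm]

lemma card_perm_overlap_le (T : Finset α) (k : ℕ) :
    #{π : Perm α | k ≤ #{a ∈ T | π a ∈ T}}
      ≤ (#T).choose k * ((#T).descFactorial k * (Fintype.card α - k).factorial) := by
  have hcover : ({π : Perm α | k ≤ #{a ∈ T | π a ∈ T}} : Finset _)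
      ⊆ (T.powersetCard k).biUnion fun A => {π : Perm α | ∀ a ∈ A, π a ∈ T} := by
    intro π hπ
    obtain ⟨A, hAsub, hAcard⟩ := exists_subset_card_eq (mem_filter.1 hπ).2
    refine mem_biUnion.2 ⟨A, mem_powersetCard.2 ⟨hAsub.trans (filter_subset _ _), hAcard⟩, ?_⟩
    exact mem_filter.2 ⟨mem_univ _, fun a ha => (mem_filter.1 (hAsub ha)).2⟩
  refine (card_le_card hcover).trans (card_biUnion_le.trans ?_)
  rw [← card_powersetCard k T, ← smul_eq_mul, ← sum_const]
  refine sum_le_sum fun A hA => ?_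
  rw [← (mem_powersetCard.1 hA).2]
  exact card_perm_mapsTo_le A T

lemma card_perm_large_overlap_pow_le {T : Finset α} (hL : 250 ≤ Fintype.card α)
    (hT : 2 * Fintype.card α ≤ 5 * #T) (hT' : 2 * #T ≤ Fintype.card α) :
    #{π : Perm α | #T - #T / 100 ≤ #{a ∈ T | π a ∈ T}} ^ 4 * 2 ^ (Fintype.card α + 1)
      ≤ (Fintype.card α).factorial ^ 4 := by
  set L := Fintype.card α
  set s := #T
  set m := s / 100
  set k := s - m
  set b := #{π : Perm α | k ≤ #{a ∈ T | π a ∈ T}}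
  have hb : b * 2 ^ k ≤ 2 ^ (10 * m) * L.factorial := calc
    b * 2 ^ k ≤ s.choose k * (s.descFactorial k * (L - k).factorial) * 2 ^ k :=
        Nat.mul_le_mul_right _ (card_perm_overlap_le T k)
    _ = s.choose m * ((2 ^ k * s.descFactorial k) * (L - k).factorial) := by
        rw [Nat.choose_symm (Nat.div_le_self s 100)]; ring
    _ ≤ 2 ^ (10 * m) * (L.descFactorial k * (L - k).factorial) := by
        gcongr
        · exact choose_div_hundred_le s (by omega)
        · exact two_pow_mul_descFactorial_le hT' k
    _ = 2 ^ (10 * m) * L.factorial := by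
        rw [mul_comm (L.descFactorial k), Nat.factorial_mul_descFactorial (by omega)]
  have key : b ^ 4 * 2 ^ (L + 1) * 2 ^ (4 * k) ≤ L.factorial ^ 4 * 2 ^ (4 * k) := calc
    b ^ 4 * 2 ^ (L + 1) * 2 ^ (4 * k) = (b * 2 ^ k) ^ 4 * 2 ^ (L + 1) := by ring
    _ ≤ (2 ^ (10 * m) * L.factorial) ^ 4 * 2 ^ (L + 1) := by gcongr
    _ = L.factorial ^ 4 * 2 ^ (40 * m + (L + 1)) := by ring
    _ ≤ L.factorial ^ 4 * 2 ^ (4 * k) := by gcongr <;> omega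
  exact Nat.le_of_mul_le_mul_right key (by positivity)

def IsExpanding (π : Fin 4 → Perm α) : Prop :=
  ∀ T : Finset α, 2 * Fintype.card α ≤ 5 * #T → 2 * #T ≤ Fintype.card α →
    ∃ i, Fintype.card α ≤ 300 * #{a ∈ T | π i a ∉ T}

theorem exists_isExpanding (hL : 250 ≤ Fintype.card α) : ∃ π : Fin 4 → Perm α, IsExpanding π := by
  set L := Fintype.card α
  set mid : Finset (Finset α) := {T | 2 * L ≤ 5 * #T ∧ 2 * #T ≤ L}
  set stuck : Finset α → Finset (Perm α) := fun T => {π | #T - #T / 100 ≤ #{a ∈ T | π a ∈ T}}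
  set bad := mid.biUnion fun T => Fintype.piFinset fun _ : Fin 4 => stuck T
  have hbad : #bad * 2 ^ (L + 1) ≤ 2 ^ L * L.factorial ^ 4 := calc
    #bad * 2 ^ (L + 1) ≤ (∑ T ∈ mid, #(stuck T) ^ 4) * 2 ^ (L + 1) := by
        refine Nat.mul_le_mul_right _ (card_biUnion_le.trans_eq (sum_congr rfl fun T _ => ?_))
        rw [Fintype.card_piFinset, prod_const, card_univ, Fintype.card_fin]
    _ ≤ ∑ _T ∈ mid, L.factorial ^ 4 := by
        rw [sum_mul]
        refine sum_le_sum fun T hT => ?_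
        obtain ⟨h1, h2⟩ := (mem_filter.1 hT).2
        exact card_perm_large_overlap_pow_le hL h1 h2
    _ ≤ 2 ^ L * L.factorial ^ 4 := by
        rw [sum_const, smul_eq_mul]
        refine Nat.mul_le_mul_right _ ((card_le_univ _).trans_eq ?_)
        rw [Fintype.card_finset]
  have hcard : #bad < #(univ : Finset (Fin 4 → Perm α)) := by
    rw [card_univ, Fintype.card_fun, Fintype.card_perm, Fintype.card_fin]
    have : 0 < L.factorial ^ 4 := by positivity
    rw [pow_succ] at hbad
    nlinarith [pow_pos (two_pos (α := ℕ)) L]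
  obtain ⟨π, -, hπ⟩ := not_subset.1 fun h => (card_le_card h).not_gt hcard
  refine ⟨π, fun T hT hT' => ?_⟩
  by_contra! hsmall
  refine hπ (mem_biUnion.2 ⟨T, mem_filter.2 ⟨mem_univ _, hT, hT'⟩, ?_⟩)
  refine Fintype.mem_piFinset.2 fun i => mem_filter.2 ⟨mem_univ _, ?_⟩
  have hsplit := card_filter_add_card_filter_not (s := T) (fun a => π i a ∈ T)
  have := hsmall i
  omega

end Expander

section Gibbs

variable {W : Type*} [DecidableEq W] (E : (W → Bool) → ℝ) (A : Finset W) (η : W → Bool)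

local notation "configs" => A.pi fun _ => (univ : Finset Bool)

lemma patch_self : patch A η (fun a _ => η a) = η := by
  funext v; by_cases hv : v ∈ A <;> simp [patch, hv]

lemma wsum_one_pos : 0 < wsum E A η fun _ => 1 :=
  sum_pos (fun p _ => by simp [Real.exp_pos]) ⟨fun a _ => η a, by simp⟩

variable {E A η}

lemma gExp_mono {f h : (W → Bool) → ℝ} (hfh : ∀ p ∈ configs, f (patch A η p) ≤ h (patch A η p)) :
    gExp E A η f ≤ gExp E A η h :=
  div_le_div_of_nonneg_right (sum_le_sum fun p hp => by gcongr; exact hfh p hp)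
    (wsum_one_pos E A η).le

lemma gExp_const_mul (c : ℝ) (f : (W → Bool) → ℝ) :
    gExp E A η (fun σ => c * f σ) = c * gExp E A η f := by
  simp only [gExp, wsum, mul_left_comm _ c, ← mul_sum, mul_div_assoc]

lemma gExp_eq_const {f : (W → Bool) → ℝ} {c : ℝ} (hf : ∀ p ∈ configs, f (patch A η p) = c) :
    gExp E A η f = c := by
  have h : wsum E A η f = c * wsum E A η (fun _ => 1) := by
    rw [wsum, wsum, mul_sum]; exact sum_congr rfl fun p hp => by rw [hf p hp]; ring
  rw [gExp, h, mul_div_cancel_right₀ _ (wsum_one_pos E A η).ne']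

lemma gVar_eq_zero_of_const {f : (W → Bool) → ℝ} {c : ℝ}
    (hf : ∀ p ∈ configs, f (patch A η p) = c) : gVar E A η f = 0 := by
  rw [gVar, gExp_eq_const hf, gExp_eq_const (c := c ^ 2) fun p hp => by rw [hf p hp]]; ring

lemma gVar_of_indicator {f : (W → Bool) → ℝ} (hf : ∀ σ, f σ = 0 ∨ f σ = 1) :
    gVar E A η f = gExp E A η f * (1 - gExp E A η f) := by
  have hsq : gExp E A η (fun σ => f σ ^ 2) = gExp E A η f := by
    rw [gExp, gExp, wsum, wsum]
    congr 1
    exact sum_congr rfl fun p _ => by rcases hf (patch A η p) with h | h <;> simp [h]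
  rw [gVar, hsq]; ring

lemma gVar_le_quarter_of_indicator {f : (W → Bool) → ℝ} (hf : ∀ σ, f σ = 0 ∨ f σ = 1) :
    gVar E A η f ≤ 1 / 4 := by
  rw [gVar_of_indicator hf]; nlinarith [sq_nonneg (gExp E A η f - 1 / 2)]

lemma gExp_eq_half_of_flip {f : (W → Bool) → ℝ}
    (hE : ∀ p ∈ configs, E (patch A η fun a ha => !p a ha) = E (patch A η p))
    (hf : ∀ p ∈ configs, f (patch A η fun a ha => !p a ha) = 1 - f (patch A η p)) :
    gExp E A η f = 1 / 2 := by
  have hflip : wsum E A η f = wsum E A η fun σ => 1 - f σ := by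
    refine sum_nbij' (fun p a ha => !p a ha) (fun p a ha => !p a ha) (by simp) (by simp)
      (by simp) (by simp) fun p hp => ?_
    simp only [hE p hp, hf p hp, sub_sub_cancel]
  have hsub : (wsum E A η fun σ => 1 - f σ) = wsum E A η (fun _ => 1) - wsum E A η f := by
    simp only [wsum, ← sum_sub_distrib, mul_sub, mul_one]
  rw [gExp, div_eq_iff (wsum_one_pos E A η).ne']
  linarith

lemma gProb_le_of_energy_gap {P : (W → Bool) → Prop} {D : ℝ}
    (hgap : ∀ p ∈ configs, P (patch A η p) → E (patch A η p) + D ≤ E η) :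
    gProb E A η P ≤ 2 ^ #A * Real.exp (-D) := by
  have hterm : ∀ p ∈ configs, Real.exp (E (patch A η p)) * (if P (patch A η p) then 1 else 0)
      ≤ Real.exp (E η) * Real.exp (-D) := by
    intro p hp
    split_ifs with hP
    · rw [mul_one, ← Real.exp_add]; exact Real.exp_le_exp.2 (by linarith [hgap p hp hP])
    · rw [mul_zero]; positivity
  have hnum : wsum E A η (fun σ => if P σ then 1 else 0)
      ≤ 2 ^ #A * (Real.exp (E η) * Real.exp (-D)) := by
    refine (sum_le_sum hterm).trans_eq ?_
    rw [sum_const, card_pi, prod_const, card_univ, Fintype.card_bool, nsmul_eq_mul]; push_cast; ring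
  have hden : Real.exp (E η) ≤ wsum E A η fun _ => 1 := by
    have := single_le_sum (f := fun p => Real.exp (E (patch A η p)) * 1)
      (fun p _ => by positivity) (show (fun a _ => η a) ∈ configs by simp)
    rwa [patch_self, mul_one] at this
  rw [gProb, gExp, div_le_iff₀ (wsum_one_pos E A η)]
  calc _ ≤ 2 ^ #A * (Real.exp (E η) * Real.exp (-D)) := hnum
    _ ≤ 2 ^ #A * Real.exp (-D) * wsum E A η fun _ => 1 := by
        rw [mul_comm (Real.exp _), ← mul_assoc]; gcongr

end Gibbs

section Majority

variable {W : Type*}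

def magnetization (B : Finset W) (σ : W → Bool) : ℤ := ∑ v ∈ B, if σ v then 1 else -1

def majority (B : Finset W) (σ : W → Bool) : ℝ := if 0 < magnetization B σ then 1 else 0

lemma majority_eq_zero_or_one (B : Finset W) (σ : W → Bool) :
    majority B σ = 0 ∨ majority B σ = 1 := by
  unfold majority; split_ifs <;> simp

lemma magnetization_eq (B : Finset W) (σ : W → Bool) :
    magnetization B σ = 2 * #{v ∈ B | σ v} - #B := by
  rw [magnetization, sum_ite, sum_const, sum_const]
  have := card_filter_add_card_filter_not (s := B) (σ ·)
  simp only [nsmul_eq_mul, mul_one, mul_neg_one]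
  omega

lemma abs_magnetization_le (B : Finset W) (σ : W → Bool) : |magnetization B σ| ≤ #B := by
  have := card_filter_le B (σ ·)
  rw [magnetization_eq, abs_le]; constructor <;> omega

lemma magnetization_of_flip {B : Finset W} {σ τ : W → Bool} (h : ∀ v ∈ B, τ v = !σ v) :
    magnetization B τ = -magnetization B σ := by
  rw [magnetization, magnetization, ← sum_neg_distrib]
  exact sum_congr rfl fun v hv => by cases hσ : σ v <;> simp [h v hv, hσ]

lemma majority_of_flip {B : Finset W} (hB : Odd #B) {σ τ : W → Bool} (h : ∀ v ∈ B, τ v = !σ v) :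
    majority B τ = 1 - majority B σ := by
  have hodd : magnetization B σ ≠ 0 := by
    rw [magnetization_eq]; obtain ⟨t, ht⟩ := hB; omega
  unfold majority; rw [magnetization_of_flip h]
  rcases hodd.lt_or_gt with hlt | hgt
  · simp [hlt, hlt.not_gt]
  · simp [hgt, hgt.le]

variable [DecidableEq W]

lemma abs_magnetization_update_sub_le {B : Finset W} {x : W} (hx : x ∈ B) (σ : W → Bool)
    (b : Bool) : |magnetization B (Function.update σ x b) - magnetization B σ| ≤ 2 := by
  rw [magnetization, magnetization, ← add_sum_erase B _ hx, ← add_sum_erase B _ hx,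
    sum_congr rfl fun v hv => by rw [Function.update_of_ne (ne_of_mem_erase hv)],
    Function.update_self]
  rw [abs_le]; constructor <;> split_ifs <;> omega

lemma majority_update_eq {B : Finset W} (hB : Odd #B) {x : W} (hx : x ∈ B) {σ : W → Bool}
    (hσ : 1 < |magnetization B σ|) (b : Bool) :
    majority B (Function.update σ x b) = majority B σ := by
  -- the magnetisation is odd, so `|m| ≥ 3`, and one spin moves it by at most `2`
  have hupd := abs_magnetization_update_sub_le hx σ b
  have hodd : ∃ t : ℤ, magnetization B σ = 2 * t + 1 := by
    rw [magnetization_eq]; obtain ⟨t, ht⟩ := hB; exact ⟨#{v ∈ B | σ v} - t - 1, by omega⟩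
  obtain ⟨t, ht⟩ := hodd
  rw [abs_le] at hupd; rw [lt_abs] at hσ
  unfold majority
  congr 1
  apply propext
  omega

lemma gVar_single_majority_le (E : (W → Bool) → ℝ) {B : Finset W} (hB : Odd #B) {x : W}
    (hx : x ∈ B) (σ : W → Bool) :
    gVar E {x} σ (majority B) ≤ 1 / 4 * if |magnetization B σ| ≤ 1 then 1 else 0 := by
  split_ifs with hσ
  · rw [mul_one]; exact gVar_le_quarter_of_indicator (majority_eq_zero_or_one B)
  · refine (gVar_eq_zero_of_const (c := majority B σ) fun p _ => ?_).le.trans (by norm_num)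
    have : patch {x} σ p = Function.update σ x (p x (mem_singleton_self x)) := by
      funext v; by_cases hv : v = x <;> simp [patch, hv]
    rw [this, majority_update_eq hB hx (not_le.1 hσ)]

lemma dirich_majority_le (E : (W → Bool) → ℝ) {B : Finset W} (hB : Odd #B) (η : W → Bool) :
    dirich E B η (majority B) ≤ #B / 4 * gProb E B η fun σ => |magnetization B σ| ≤ 1 := by
  calc dirich E B η (majority B)
      ≤ ∑ _x ∈ B, 1 / 4 * gProb E B η fun σ => |magnetization B σ| ≤ 1 :=
        sum_le_sum fun x hx => (gExp_mono fun p _ => (gVar_single_majority_le E hB hx _).trans_eq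
          (by congr)).trans_eq (gExp_const_mul _ _)
    _ = _ := by rw [sum_const, nsmul_eq_mul]; ring

end Majority

lemma exists_balanced_value {α : Type*} [Fintype α] (τ : α → Bool) (hL : 10 ≤ Fintype.card α)
    (h : 11 * |magnetization univ τ| ≤ Fintype.card α + 11) :
    ∃ b, 2 * Fintype.card α ≤ 5 * #{a | τ a = b} ∧ 2 * #{a | τ a = b} ≤ Fintype.card α := by
  have hsplit := card_filter_add_card_filter_not (s := univ) (τ · = true)
  simp only [Bool.not_eq_true, card_univ] at hsplit
  rw [magnetization_eq, card_univ] at h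
  have h₁ := le_abs_self (2 * (#{a | τ a = true} : ℤ) - Fintype.card α)
  have h₂ := neg_abs_le (2 * (#{a | τ a = true} : ℤ) - Fintype.card α)
  by_cases ht : 2 * #{a | τ a = true} ≤ Fintype.card α
  · exact ⟨true, by omega, ht⟩
  · exact ⟨false, by omega, by omega⟩

section Energy

variable {W : Type*} (G : SimpleGraph W) (B : Finset W)

lemma spin_mul_spin_le_one (b c : Bool) : spin b * spin c ≤ 1 := by
  cases b <;> cases c <;> norm_num [spin]

lemma energyF_of_flip {σ τ : W → Bool} (h : ∀ v ∈ B, τ v = !σ v) :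
    energyF G B τ = energyF G B σ := by
  unfold energyF
  congr 1
  refine sum_congr rfl fun x hx => sum_congr rfl fun y hy => ?_
  rw [h x hx, h y (mem_filter.1 hy).1]
  cases σ x <;> cases σ y <;> norm_num [spin]

lemma card_le_energyF_sub {S : Finset W} (hS : S ⊆ B) {σ : W → Bool}
    (hdis : ∀ x ∈ S, ∃ y ∈ B, G.Adj x y ∧ σ x ≠ σ y) :
    (#S : ℝ) ≤ energyF G B (fun _ => true) - energyF G B σ := by
  set F : W → ℝ := fun x => ∑ y ∈ B with G.Adj x y, (1 - spin (σ x) * spin (σ y))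
  have hF : energyF G B (fun _ => true) - energyF G B σ = 1 / 2 * ∑ x ∈ B, F x := by
    simp only [energyF, F, ← mul_sub, ← sum_sub_distrib, spin, if_true, mul_one]
  have hF0 : ∀ x, 0 ≤ F x := fun x =>
    sum_nonneg fun y _ => sub_nonneg.2 (spin_mul_spin_le_one _ _)
  have hFS : ∀ x ∈ S, 2 ≤ F x := by
    intro x hx
    obtain ⟨y, hyB, hadj, hne⟩ := hdis x hx
    have hterm : 1 - spin (σ x) * spin (σ y) = 2 := by
      cases hσx : σ x <;> cases hσy : σ y <;> simp_all [spin] <;> norm_num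
    exact hterm ▸ single_le_sum (f := fun y => 1 - spin (σ x) * spin (σ y))
      (fun y _ => sub_nonneg.2 (spin_mul_spin_le_one _ _)) (mem_filter.2 ⟨hyB, hadj⟩)
  have := card_nsmul_le_sum S F 2 hFS
  rw [nsmul_eq_mul] at this
  rw [hF]
  linarith [sum_le_sum_of_subset_of_nonneg hS fun x _ _ => hF0 x]

variable [DecidableEq W]

lemma gVar_majority (β : ℝ) (hB : Odd #B) (η : W → Bool) :
    gVar (fun σ => β * energyF G B σ) B η (majority B) = 1 / 4 := by
  have hflip : ∀ p : ∀ a ∈ B, Bool, ∀ v ∈ B, patch B η (fun a ha => !p a ha) v = !patch B η p v :=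
    fun p v hv => by simp [patch, hv]
  rw [gVar_of_indicator (majority_eq_zero_or_one B), gExp_eq_half_of_flip
    (fun p _ => by rw [energyF_of_flip G B (hflip p)]) (fun p _ => majority_of_flip hB (hflip p))]
  norm_num

end Energy

/-- Level `k` of the `K`-ary tree is `Fin (K ^ k)`: the children of `a` at level `k` are
`a + j * K ^ k` for `j < K`, so the parent of `b` at level `k + 1` is `b % K ^ k`. -/
abbrev LayeredVertex (K : ℕ) := Σ k : ℕ, Fin (K ^ k)

namespace LayeredVertex

variable {K : ℕ}

lemma ext_iff {u v : LayeredVertex K} : u = v ↔ u.1 = v.1 ∧ (u.2 : ℕ) = v.2 := by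
  obtain ⟨k, a⟩ := u
  obtain ⟨l, b⟩ := v
  constructor
  · rintro h; cases h; simp
  · rintro ⟨rfl, h⟩; exact congrArg _ (Fin.ext h)

def root : LayeredVertex K := ⟨0, ⟨0, by simp⟩⟩

def child (u : LayeredVertex K) (j : Fin K) : LayeredVertex K :=
  ⟨u.1 + 1, ⟨u.2 + j * K ^ u.1, by
    rw [pow_succ]
    nlinarith [u.2.isLt, j.isLt]⟩⟩

lemma child_injective (u : LayeredVertex K) : Function.Injective (child u) := by
  intro j j' h
  have := (ext_iff.1 h).2
  simp only [child] at this
  exact Fin.ext (Nat.eq_of_mul_eq_mul_right u.2.pos (by omega))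

variable [NeZero K]

def parent (u : LayeredVertex K) : LayeredVertex K :=
  ⟨u.1 - 1, ⟨u.2 % K ^ (u.1 - 1), Nat.mod_lt _ (Nat.pos_of_neZero _)⟩⟩

lemma parent_child (u : LayeredVertex K) (j : Fin K) : parent (child u j) = u := by
  rw [ext_iff]
  refine ⟨rfl, ?_⟩
  show ((u.2 : ℕ) + j * K ^ u.1) % K ^ u.1 = u.2
  rw [Nat.add_mul_mod_self_right, Nat.mod_eq_of_lt u.2.isLt]

lemma exists_child_parent_eq (u : LayeredVertex K) (hu : u.1 ≠ 0) :
    ∃ j, child (parent u) j = u := by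
  obtain ⟨k, a⟩ := u
  obtain ⟨k, rfl⟩ := Nat.exists_eq_succ_of_ne_zero hu
  have ha : (a : ℕ) < K ^ k * K := pow_succ K k ▸ a.isLt
  refine ⟨⟨a / K ^ k, Nat.div_lt_of_lt_mul ha⟩, ext_iff.2 ⟨rfl, ?_⟩⟩
  exact Nat.mod_add_div' a (K ^ k)

end LayeredVertex

open LayeredVertex

lemma mem_nbr {V : Type*} {G : SimpleGraph V} {hlf : G.LocallyFinite} {u v : V} :
    v ∈ nbr G hlf u ↔ G.Adj u v :=
  @SimpleGraph.mem_neighborFinset _ G u (hlf u) v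

section LayeredGraph

variable {K : ℕ} (perm : (k : ℕ) → Fin 4 → Perm (Fin (K ^ k)))

def layeredGraph : SimpleGraph (LayeredVertex K) :=
  SimpleGraph.fromRel fun u v => (∃ j, v = u.child j) ∨ ∃ i, v = ⟨u.1, perm u.1 i u.2⟩

variable {perm}

lemma level_le_succ_of_adj {u v : LayeredVertex K} (h : (layeredGraph perm).Adj u v) :
    v.1 ≤ u.1 + 1 := by
  obtain ⟨-, (⟨j, rfl⟩ | ⟨i, rfl⟩) | (⟨j, rfl⟩ | ⟨i, rfl⟩)⟩ := h <;> simp [child]; omega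

lemma level_le_of_walk {u v : LayeredVertex K} (w : (layeredGraph perm).Walk u v) :
    v.1 ≤ u.1 + w.length := by
  induction w with
  | nil => simp
  | cons h _ ih => have := level_le_succ_of_adj h; simp only [SimpleGraph.Walk.length_cons]; omega

lemma adj_child (u : LayeredVertex K) (j : Fin K) : (layeredGraph perm).Adj u (u.child j) :=
  ⟨fun h => by simpa [child] using congrArg Sigma.fst h, Or.inl (Or.inl ⟨j, rfl⟩)⟩

variable [NeZero K]

lemma exists_walk_root (u : LayeredVertex K) :
    ∃ w : (layeredGraph perm).Walk root u, w.length = u.1 := by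
  suffices ∀ k, ∀ u : LayeredVertex K, u.1 = k → ∃ w : (layeredGraph perm).Walk root u,
      w.length = k from this _ u rfl
  intro k
  induction k with
  | zero =>
    intro u hu
    have hu2 : (u.2 : ℕ) < K ^ 0 := hu ▸ u.2.isLt
    rw [pow_zero] at hu2
    exact ⟨SimpleGraph.Walk.nil.copy rfl (ext_iff.2 ⟨hu.symm, by simp [root]; omega⟩), by simp⟩
  | succ k ih =>
    intro u hu
    obtain ⟨j, hj⟩ := exists_child_parent_eq u (by omega)
    obtain ⟨w, hw⟩ := ih (parent u) (by simp [parent, hu])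
    exact ⟨(w.concat (adj_child _ j)).copy rfl hj, by simp [hw]⟩

lemma dist_root (u : LayeredVertex K) : (layeredGraph perm).dist root u = u.1 := by
  obtain ⟨w, hw⟩ := exists_walk_root (perm := perm) u
  obtain ⟨w', hw'⟩ := w.reachable.exists_walk_length_eq_dist
  have := level_le_of_walk w'
  have := SimpleGraph.dist_le w
  simp only [root] at *
  omega

lemma layeredGraph_connected : (layeredGraph perm).Connected :=
  (SimpleGraph.connected_iff_exists_forall_reachable _).2
    ⟨root, fun u => (exists_walk_root u).elim fun w _ => w.reachable⟩


variable (perm) in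
def lowerNbhd (u : LayeredVertex K) : Finset (LayeredVertex K) :=
  insert (parent u) ((univ.image fun i => (⟨u.1, perm u.1 i u.2⟩ : LayeredVertex K)) ∪
    univ.image fun i => (⟨u.1, (perm u.1 i)⁻¹ u.2⟩ : LayeredVertex K))

lemma card_lowerNbhd_le (u : LayeredVertex K) : #(lowerNbhd perm u) ≤ 9 := by
  have h₁ := card_image_le (s := (univ : Finset (Fin 4)))
    (f := fun i => (⟨u.1, perm u.1 i u.2⟩ : LayeredVertex K))
  have h₂ := card_image_le (s := (univ : Finset (Fin 4)))
    (f := fun i => (⟨u.1, (perm u.1 i)⁻¹ u.2⟩ : LayeredVertex K))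
  have h₃ := card_union_le (univ.image fun i => (⟨u.1, perm u.1 i u.2⟩ : LayeredVertex K))
    (univ.image fun i => (⟨u.1, (perm u.1 i)⁻¹ u.2⟩ : LayeredVertex K))
  rw [card_univ, Fintype.card_fin] at h₁ h₂
  exact (card_insert_le _ _).trans (by omega)

lemma level_le_of_mem_lowerNbhd {u v : LayeredVertex K} (h : v ∈ lowerNbhd perm u) :
    v.1 ≤ u.1 := by
  simp only [lowerNbhd, mem_insert, mem_union, mem_image, mem_univ, true_and] at h
  obtain rfl | ⟨i, rfl⟩ | ⟨i, rfl⟩ := h <;> simp [parent]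

lemma child_or_mem_lowerNbhd_of_adj {u v : LayeredVertex K} (h : (layeredGraph perm).Adj u v) :
    (∃ j, v = u.child j) ∨ v ∈ lowerNbhd perm u := by
  obtain ⟨-, (⟨j, rfl⟩ | ⟨i, rfl⟩) | (⟨j, rfl⟩ | ⟨i, rfl⟩)⟩ := h
  · exact Or.inl ⟨j, rfl⟩
  · exact Or.inr (mem_insert_of_mem (mem_union_left _ (mem_image_of_mem _ (mem_univ i))))
  · exact Or.inr (by rw [lowerNbhd, parent_child]; exact mem_insert_self _ _)
  · exact Or.inr (mem_insert_of_mem (mem_union_right _ (mem_image.2 ⟨i, mem_univ _, by simp⟩)))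

variable (perm) in
@[reducible]
def layeredGraphLocallyFinite : (layeredGraph perm).LocallyFinite := fun u =>
  Fintype.ofFinset {v ∈ univ.image u.child ∪ lowerNbhd perm u | (layeredGraph perm).Adj u v}
    fun v => by
      simp only [mem_filter, SimpleGraph.mem_neighborSet, and_iff_right_iff_imp]
      intro h
      rcases child_or_mem_lowerNbhd_of_adj h with ⟨j, rfl⟩ | h
      · exact mem_union_left _ (mem_image_of_mem _ (mem_univ j))
      · exact mem_union_right _ h

lemma card_nbr_layeredGraph_le (u : LayeredVertex K) :
    #(nbr (layeredGraph perm) (layeredGraphLocallyFinite perm) u) ≤ K + 9 := by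
  have hsub : nbr (layeredGraph perm) (layeredGraphLocallyFinite perm) u
      ⊆ univ.image u.child ∪ lowerNbhd perm u := fun v hv => by
    rcases child_or_mem_lowerNbhd_of_adj (mem_nbr.1 hv) with ⟨j, rfl⟩ | h
    · exact mem_union_left _ (mem_image_of_mem _ (mem_univ j))
    · exact mem_union_right _ h
  have := card_image_le (s := (univ : Finset (Fin K))) (f := u.child)
  rw [card_univ, Fintype.card_fin] at this
  linarith [card_le_card hsub, card_union_le (univ.image u.child) (lowerNbhd perm u),
    card_lowerNbhd_le (perm := perm) u]

lemma isGrowing_layeredGraph {g : ℕ} (hg : g + 9 ≤ K) :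
    IsGrowing (layeredGraph perm) (layeredGraphLocallyFinite perm) g root := by
  intro u
  simp only [dist_root]
  set N := nbr (layeredGraph perm) (layeredGraphLocallyFinite perm) u
  have hdown : #{z ∈ N | z.1 ≤ u.1} ≤ 9 := by
    refine (card_le_card fun z hz => ?_).trans (card_lowerNbhd_le (perm := perm) u)
    obtain ⟨hadj, hz⟩ := mem_filter.1 hz
    rcases child_or_mem_lowerNbhd_of_adj (mem_nbr.1 hadj) with ⟨j, rfl⟩ | h
    · simp [child] at hz
    · exact h
  have hup : K ≤ #{z ∈ N | z.1 = u.1 + 1} := by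
    calc K = #(univ.image u.child) := by
          rw [card_image_of_injective _ (child_injective u), card_univ, Fintype.card_fin]
      _ ≤ _ := card_le_card fun z hz => by
          obtain ⟨j, -, rfl⟩ := mem_image.1 hz
          exact mem_filter.2 ⟨mem_nbr.2 (adj_child u j), rfl⟩
  omega

end LayeredGraph

section Ball

variable {K : ℕ}

def ball (K r : ℕ) : Finset (LayeredVertex K) := (range (r + 1)).sigma fun _ => univ

lemma mem_ball {r : ℕ} {v : LayeredVertex K} : v ∈ ball K r ↔ v.1 ≤ r := by
  simp [ball]

lemma card_ball (r : ℕ) : #(ball K r) = ∑ k ∈ range (r + 1), K ^ k := by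
  simp [ball]

lemma odd_card_ball (hK : Even K) (r : ℕ) : Odd #(ball K r) := by
  rw [card_ball, sum_range_succ', pow_zero]
  exact (Finset.even_sum _ fun k _ => hK.pow_of_ne_zero k.succ_ne_zero).add_one

lemma eleven_mul_card_ball_le (hK : 12 ≤ K) (r : ℕ) : 11 * #(ball K r) ≤ K ^ (r + 1) := by
  induction r with
  | zero => simp [card_ball]; omega
  | succ r ih =>
    rw [card_ball, sum_range_succ, ← card_ball, pow_succ K (r + 1)]
    nlinarith

lemma magnetization_ball_succ (r : ℕ) (σ : LayeredVertex K → Bool) :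
    magnetization (ball K (r + 1)) σ = magnetization (ball K r) σ
      + magnetization univ fun a : Fin (K ^ (r + 1)) => σ ⟨r + 1, a⟩ := by
  simp only [magnetization, ball, sum_sigma]
  rw [sum_range_succ]

lemma eq_ball_of_forall_mem_iff [NeZero K] {perm : (k : ℕ) → Fin 4 → Perm (Fin (K ^ k))} {r : ℕ}
    {Br : Finset (LayeredVertex K)} (h : ∀ v, v ∈ Br ↔ (layeredGraph perm).dist root v ≤ r) :
    Br = ball K r := by
  ext v; rw [h, dist_root, mem_ball]

end Ball

lemma nat_mul_two_pow_mul_exp_le (n : ℕ) :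
    (n : ℝ) * 2 ^ n * Real.exp (-(3 * n)) ≤ Real.exp (-n) := by
  have h₁ : (n : ℝ) ≤ Real.exp n := by linarith [Real.add_one_le_exp (n : ℝ)]
  have h₂ : (2 : ℝ) ^ n ≤ Real.exp n := by
    rw [← Real.exp_one_pow]; gcongr; linarith [Real.add_one_le_exp (1 : ℝ)]
  calc (n : ℝ) * 2 ^ n * Real.exp (-(3 * n)) ≤ Real.exp n * Real.exp n * Real.exp (-(3 * n)) := by
        gcongr
    _ = Real.exp (-n) := by rw [← Real.exp_add, ← Real.exp_add]; ring_nf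

section NearTie

variable {K : ℕ} {perm : (k : ℕ) → Fin 4 → Perm (Fin (K ^ k))}

lemma eleven_mul_abs_magnetization_level_le (hK : 12 ≤ K) {r : ℕ} {σ : LayeredVertex K → Bool}
    (hσ : |magnetization (ball K (r + 1)) σ| ≤ 1) :
    11 * |magnetization univ fun a : Fin (K ^ (r + 1)) => σ ⟨r + 1, a⟩| ≤ K ^ (r + 1) + 11 := by
  have hgeom : 11 * (#(ball K r) : ℤ) ≤ K ^ (r + 1) := by
    exact_mod_cast eleven_mul_card_ball_le hK r
  have hsplit := magnetization_ball_succ r σ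
  have hlow := abs_magnetization_le (ball K r) σ
  rw [abs_le] at hσ hlow
  have : |magnetization univ fun a : Fin (K ^ (r + 1)) => σ ⟨r + 1, a⟩| ≤ #(ball K r) + 1 :=
    abs_le.2 ⟨by omega, by omega⟩
  omega

lemma card_ball_div_le_energyF_sub (hK : 12 ≤ K) {r : ℕ} (hexp : IsExpanding (perm (r + 1)))
    {σ : LayeredVertex K → Bool} (hσ : |magnetization (ball K (r + 1)) σ| ≤ 1) :
    (#(ball K (r + 1)) : ℝ) / 400 ≤ energyF (layeredGraph perm) (ball K (r + 1)) (fun _ => true)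
      - energyF (layeredGraph perm) (ball K (r + 1)) σ := by
  have hgeom := eleven_mul_card_ball_le hK r
  have hL : 12 ≤ K ^ (r + 1) := hK.trans (Nat.le_self_pow r.succ_ne_zero K)
  obtain ⟨b, hb, hb'⟩ := exists_balanced_value (fun a : Fin (K ^ (r + 1)) => σ ⟨r + 1, a⟩)
    (by rw [Fintype.card_fin]; omega)
    (by rw [Fintype.card_fin]; exact_mod_cast eleven_mul_abs_magnetization_level_le hK hσ)
  obtain ⟨i, hi⟩ := hexp _ hb hb'
  set T : Finset (Fin (K ^ (r + 1))) := {a | σ ⟨r + 1, a⟩ = b}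
  set X := {a ∈ T | perm (r + 1) i a ∉ T}
  have hgap := card_le_energyF_sub (layeredGraph perm) (ball K (r + 1))
    (S := X.map ⟨Sigma.mk (r + 1), sigma_mk_injective⟩) (σ := σ) (fun v hv => ?_) fun v hv => ?_
  · rw [card_map] at hgap
    have : #(ball K (r + 1)) ≤ 400 * #X := by
      rw [Fintype.card_fin] at hi
      rw [card_ball, sum_range_succ, ← card_ball]
      omega
    have : (#(ball K (r + 1)) : ℝ) ≤ 400 * #X := by exact_mod_cast this
    linarith
  · obtain ⟨a, -, rfl⟩ := mem_map.1 hv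
    exact mem_ball.2 le_rfl
  · obtain ⟨a, ha, rfl⟩ := mem_map.1 hv
    simp only [X, T, mem_filter, mem_univ, true_and] at ha
    have hne : σ ⟨r + 1, a⟩ ≠ σ ⟨r + 1, perm (r + 1) i a⟩ := fun h => ha.2 (h.symm.trans ha.1)
    exact ⟨_, mem_ball.2 le_rfl, ⟨fun h => hne (congrArg σ h), Or.inl (Or.inr ⟨i, rfl⟩)⟩, hne⟩

lemma dirich_majority_ball_le (hK : 12 ≤ K) (hK' : Even K) {r : ℕ}
    (hexp : IsExpanding (perm (r + 1))) {β : ℝ} (hβ : 1200 ≤ β) :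
    dirich (fun σ => β * energyF (layeredGraph perm) (ball K (r + 1)) σ) (ball K (r + 1))
      (fun _ => true) (majority (ball K (r + 1))) ≤ Real.exp (-#(ball K (r + 1))) / 4 := by
  set n := #(ball K (r + 1))
  calc _ ≤ n / 4 * gProb _ _ _ fun σ => |magnetization (ball K (r + 1)) σ| ≤ 1 :=
        dirich_majority_le _ (odd_card_ball hK' (r + 1)) _
    _ ≤ n / 4 * (2 ^ n * Real.exp (-(β * (n / 400)))) := by
        refine mul_le_mul_of_nonneg_left (gProb_le_of_energy_gap fun p _ hp => ?_) (by positivity)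
        have := mul_le_mul_of_nonneg_left (card_ball_div_le_energyF_sub hK hexp hp)
          (by linarith : (0 : ℝ) ≤ β)
        linarith
    _ ≤ n / 4 * (2 ^ n * Real.exp (-(3 * n))) := by
        have : 3 * (n : ℝ) ≤ β * (n / 400) := by nlinarith [(Nat.cast_nonneg n : (0 : ℝ) ≤ n)]
        gcongr
    _ = n * 2 ^ n * Real.exp (-(3 * n)) / 4 := by ring
    _ ≤ Real.exp (-n) / 4 := by gcongr; exact nat_mul_two_pow_mul_exp_le n

end NearTie

def expanderLayers (K k : ℕ) : Fin 4 → Perm (Fin (K ^ k)) :=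
  if h : 250 ≤ Fintype.card (Fin (K ^ k)) then (exists_isExpanding h).choose else 1

lemma isExpanding_expanderLayers {K k : ℕ} (hK : 12 ≤ K) (hk : 3 ≤ k) :
    IsExpanding (expanderLayers K k) := by
  have h : 250 ≤ Fintype.card (Fin (K ^ k)) := by
    rw [Fintype.card_fin]
    calc 250 ≤ 12 ^ 3 := by norm_num
      _ ≤ K ^ 3 := by gcongr
      _ ≤ K ^ k := Nat.pow_le_pow_right (by omega) hk
  rw [expanderLayers, dif_pos h]
  exact (exists_isExpanding h).choose_spec

/-- for every `g ≥ 1` there is an infinite connected bounded-degree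
`(g,o)`-growing graph on which, for all low enough temperatures, the free-boundary
Glauber dynamics on the `n`-vertex ball `B_r` has spectral gap at most `e^{-θ n}`. -/
theorem statement1 (g : ℕ) (hg : 1 ≤ g) :
    ∃ (V : Type) (_ : DecidableEq V) (_ : Infinite V) (G : SimpleGraph V)
      (hlf : G.LocallyFinite) (o : V) (Δ : ℕ),
      G.Connected ∧ (∀ v : V, (nbr G hlf v).card ≤ Δ) ∧ IsGrowing G hlf g o ∧
      ∃ β₀ θ : ℝ, 0 < β₀ ∧ 0 < θ ∧
        ∀ β : ℝ, β₀ ≤ β → ∃ r₀ : ℕ, ∀ r : ℕ, r₀ ≤ r →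
          ∀ Br : Finset V, (∀ v : V, v ∈ Br ↔ G.dist o v ≤ r) →
            ∃ f : (V → Bool) → ℝ,
              gVar (fun σ => β * energyF G Br σ) Br (fun _ => true) f ≠ 0 ∧
              dirich (fun σ => β * energyF G Br σ) Br (fun _ => true) f ≤
                Real.exp (-θ * (Br.card : ℝ)) *
                  gVar (fun σ => β * energyF G Br σ) Br (fun _ => true) f := by
  -- `K = 2g + 10` is even (balls have odd size, so the majority is never tied), at least
  -- `g + 9` (growth) and at least `12` (the last level carries `11/12` of a ball).
  have : NeZero (2 * g + 10) := ⟨by omega⟩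
  have hK : Even (2 * g + 10) := ⟨g + 5, by ring⟩
  refine ⟨LayeredVertex (2 * g + 10), inferInstance, inferInstance,
    layeredGraph (expanderLayers _), layeredGraphLocallyFinite _, root, 2 * g + 10 + 9,
    layeredGraph_connected, card_nbr_layeredGraph_le, isGrowing_layeredGraph (by omega),
    1200, 1, by norm_num, by norm_num, fun β hβ => ⟨3, fun r hr Br hBr => ?_⟩⟩
  obtain ⟨r, rfl⟩ : ∃ r', r = r' + 1 := ⟨r - 1, by omega⟩
  obtain rfl := eq_ball_of_forall_mem_iff hBr
  have hvar := gVar_majority (layeredGraph (expanderLayers _)) _ β (odd_card_ball hK (r + 1))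
    (fun _ => true)
  refine ⟨majority _, by rw [hvar]; norm_num, ?_⟩
  rw [hvar, neg_one_mul, ← div_eq_mul_one_div]
  exact dirich_majority_ball_le (by omega) hK (isExpanding_expanderLayers (by omega) hr) hβ
end
end

section
/- Let G be a (possibly infinite) graph with maximal degree at most Δ and let v be a fixed vertex of G. Then for every p ≥ 1, the number of connected vertex subsets of G with exactly p vertices that contain v is at most (e(Δ+1))^p, where e is Euler's number. -/
/- Common framework: Ising model with boundary conditions on (finite pieces of)
   locally finite graphs, heat-bath Glauber dynamics quantities. -/

open Finset
open scoped Classical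

noncomputable section

open IsingGlauber

/-! Peierls' argument: declare each vertex open independently with probability
`q = 1/(Δ+1)`. A connected set `C ∋ v` is the open cluster of `v` exactly when `C` is open
and its vertex boundary is closed; these events are disjoint for distinct `C` and have
probability `q^|C| (1-q)^|∂C| ≥ q^p (1-q)^(pΔ)`. Hence there are at most
`q^(-p) (1-q)^(-pΔ) = ((Δ+1) (1 + 1/Δ)^Δ)^p ≤ (e(Δ+1))^p` such sets. -/

section Cylinder

variable {ι : Type*} [Fintype ι]

def bernoulliWeight (q : ℝ) (ω : ι → Bool) : ℝ :=
  ∏ i, if ω i then q else 1 - q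

def cylinder (P N : Finset ι) : Finset (ι → Bool) :=
  univ.filter fun ω => ∀ i, (i ∈ P → ω i = true) ∧ (i ∈ N → ω i = false)

lemma bernoulliWeight_nonneg {q : ℝ} (hq₀ : 0 ≤ q) (hq₁ : q ≤ 1) (ω : ι → Bool) :
    0 ≤ bernoulliWeight q ω :=
  prod_nonneg fun i _ => by split_ifs <;> linarith

lemma sum_bernoulliWeight (q : ℝ) : ∑ ω : ι → Bool, bernoulliWeight q ω = 1 := by
  simp [bernoulliWeight, (Fintype.prod_sum fun (_ : ι) (b : Bool) => if b then q else 1 - q).symm]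

lemma sum_bernoulliWeight_cylinder {P N : Finset ι} (hPN : Disjoint P N) (q : ℝ) :
    ∑ ω ∈ cylinder P N, bernoulliWeight q ω = q ^ #P * (1 - q) ^ #N := by
  let g : ι → Bool → ℝ := fun i b =>
    if (i ∈ P → b = true) ∧ (i ∈ N → b = false) then (if b then q else 1 - q) else 0
  have site :
      ∀ i, ∑ b, g i b = (if i ∈ P then q else 1) * (if i ∈ N then 1 - q else 1) := by
    intro i
    by_cases hP : i ∈ P
    · simp [g, hP, disjoint_left.mp hPN hP]
    · by_cases hN : i ∈ N <;> simp [g, hP, hN]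
  calc ∑ ω ∈ cylinder P N, bernoulliWeight q ω
      = ∑ ω : ι → Bool, ∏ i, g i (ω i) := by
        simp only [g, cylinder, sum_filter, bernoulliWeight, prod_ite_zero, mem_univ, true_implies]
    _ = ∏ i, ((if i ∈ P then q else 1) * (if i ∈ N then 1 - q else 1)) := by
        rw [← Fintype.prod_sum g]; exact prod_congr rfl fun i _ => site i
    _ = q ^ #P * (1 - q) ^ #N := by
        rw [prod_mul_distrib, prod_ite_mem, prod_ite_mem, univ_inter, univ_inter, prod_const,
          prod_const]

lemma disjoint_of_mem_cylinder {P N P' N' : Finset ι} {ω : ι → Bool}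
    (h : ω ∈ cylinder P N) (h' : ω ∈ cylinder P' N') : Disjoint P N' := by
  simp only [cylinder, mem_filter, mem_univ, true_and] at h h'
  exact disjoint_left.mpr fun i hP hN => by simpa [(h i).1 hP] using (h' i).2 hN

theorem sum_pow_mul_pow_le_one_of_cylinders {α : Type*} (s : Finset α) (P N : α → Finset ι)
    (hPN : ∀ a ∈ s, Disjoint (P a) (N a))
    (hsep : ∀ a ∈ s, ∀ b ∈ s, Disjoint (P a) (N b) → Disjoint (P b) (N a) → a = b)
    {q : ℝ} (hq₀ : 0 ≤ q) (hq₁ : q ≤ 1) :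
    ∑ a ∈ s, q ^ #(P a) * (1 - q) ^ #(N a) ≤ 1 := by
  have hdisj : (s : Set α).PairwiseDisjoint fun a => cylinder (P a) (N a) :=
    fun a ha b hb hab => disjoint_left.mpr fun ω hωa hωb => hab <| hsep a ha b hb
      (disjoint_of_mem_cylinder hωa hωb) (disjoint_of_mem_cylinder hωb hωa)
  calc ∑ a ∈ s, q ^ #(P a) * (1 - q) ^ #(N a)
      = ∑ ω ∈ s.biUnion fun a => cylinder (P a) (N a), bernoulliWeight q ω := by
        rw [sum_biUnion hdisj]
        exact sum_congr rfl fun a ha => (sum_bernoulliWeight_cylinder (hPN a ha) q).symm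
    _ ≤ ∑ ω, bernoulliWeight q ω :=
        sum_le_univ_sum_of_nonneg (bernoulliWeight_nonneg hq₀ hq₁)
    _ = 1 := sum_bernoulliWeight q

end Cylinder

lemma one_le_exp_one_mul_div_pow (n : ℕ) : 1 ≤ Real.exp 1 * ((n : ℝ) / (n + 1)) ^ n := by
  rcases eq_or_ne n 0 with rfl | hn
  · simp [Real.one_le_exp zero_le_one]
  have hinv : ((n : ℝ) / (n + 1)) ^ n * (1 + (n : ℝ)⁻¹) ^ n = 1 := by
    rw [← mul_pow]
    field_simp
    simp
  calc (1 : ℝ) = ((n : ℝ) / (n + 1)) ^ n * (1 + (n : ℝ)⁻¹) ^ n := hinv.symm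
    _ ≤ ((n : ℝ) / (n + 1)) ^ n * Real.exp 1 := by gcongr; exact Real.one_add_inv_pow_le_exp
    _ = Real.exp 1 * ((n : ℝ) / (n + 1)) ^ n := mul_comm _ _

lemma one_le_exp_one_mul_pow_mul_pow (Δ p : ℕ) :
    1 ≤ (Real.exp 1 * ((Δ : ℝ) + 1)) ^ p *
      ((1 / ((Δ : ℝ) + 1)) ^ p * (1 - 1 / ((Δ : ℝ) + 1)) ^ (p * Δ)) := by
  have h1q : 1 - 1 / ((Δ : ℝ) + 1) = Δ / (Δ + 1) := by field_simp; ring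
  calc (1 : ℝ) ≤ (Real.exp 1 * ((Δ : ℝ) / (Δ + 1)) ^ Δ) ^ p :=
        one_le_pow₀ (one_le_exp_one_mul_div_pow Δ)
    _ = _ := by
        rw [h1q, mul_comm p Δ, pow_mul, ← mul_pow, ← mul_pow]
        field_simp

section Graph

variable {V : Type*} [DecidableEq V] (G : SimpleGraph V) (hlf : G.LocallyFinite)

lemma card_vbd_le {Δ : ℕ} (hΔ : ∀ x, #(nbr G hlf x) ≤ Δ) (C : Finset V) :
    #(vbd G hlf C) ≤ #C * Δ :=
  (card_le_card sdiff_subset).trans (card_biUnion_le_card_mul _ _ _ fun x _ => hΔ x)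

lemma subset_of_disjoint_vbd {C D : Finset V} (hC : (G.induce (C : Set V)).Connected) {v : V}
    (hvC : v ∈ C) (hvD : v ∈ D) (hCD : Disjoint C (vbd G hlf D)) : C ⊆ D := by
  intro c hc
  obtain ⟨w⟩ := hC.preconnected ⟨v, hvC⟩ ⟨c, hc⟩
  suffices ∀ a b : (C : Set V), (G.induce (C : Set V)).Walk a b → a.1 ∈ D → b.1 ∈ D from
    this _ _ w hvD
  intro a b w
  induction w with
  | nil => exact id
  | @cons a b _ hadj _ ih =>
    refine fun ha => ih (by_contra fun hb => disjoint_left.mp hCD b.2 ?_)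
    exact mem_sdiff.mpr ⟨mem_biUnion.mpr ⟨a, ha, by simpa [nbr] using hadj⟩, hb⟩

theorem sum_pow_mul_pow_vbd_le_one (s : Finset (Finset V)) {v : V}
    (hs : ∀ C ∈ s, v ∈ C ∧ (G.induce (C : Set V)).Connected)
    {q : ℝ} (hq₀ : 0 ≤ q) (hq₁ : q ≤ 1) :
    ∑ C ∈ s, q ^ #C * (1 - q) ^ #(vbd G hlf C) ≤ 1 := by
  -- the percolation configurations live on the finite set `U`
  set U := s.biUnion (cl G hlf)
  have hCU : ∀ C ∈ s, C ⊆ U := fun C hC =>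
    subset_union_left.trans (subset_biUnion_of_mem (cl G hlf) hC)
  have hvbdU : ∀ C ∈ s, vbd G hlf C ⊆ U := fun C hC =>
    subset_union_right.trans (subset_biUnion_of_mem (cl G hlf) hC)
  have card_restrict : ∀ A ⊆ U, #(A.subtype (· ∈ U)) = #A := fun A hA => by
    rw [card_subtype, filter_true_of_mem hA]
  have disjoint_restrict : ∀ A B : Finset V, A ⊆ U →
      (Disjoint (A.subtype (· ∈ U)) (B.subtype (· ∈ U)) ↔ Disjoint A B) := fun A B hA => by
    simp only [disjoint_left, mem_subtype, Subtype.forall]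
    exact ⟨fun h x hx => h x (hA hx) hx, fun h x _ hx => h hx⟩
  calc ∑ C ∈ s, q ^ #C * (1 - q) ^ #(vbd G hlf C)
      = ∑ C ∈ s, q ^ #(C.subtype (· ∈ U)) * (1 - q) ^ #((vbd G hlf C).subtype (· ∈ U)) :=
        sum_congr rfl fun C hC => by rw [card_restrict C (hCU C hC), card_restrict _ (hvbdU C hC)]
    _ ≤ 1 := by
      refine sum_pow_mul_pow_le_one_of_cylinders s _ _ (fun C hC => ?_)
        (fun C hC D hD hCD hDC => ?_) hq₀ hq₁
      · exact (disjoint_restrict _ _ (hCU C hC)).mpr disjoint_sdiff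
      · rw [disjoint_restrict _ _ (hCU C hC)] at hCD
        rw [disjoint_restrict _ _ (hCU D hD)] at hDC
        exact subset_antisymm (subset_of_disjoint_vbd G hlf (hs C hC).2 (hs C hC).1 (hs D hD).1 hCD)
          (subset_of_disjoint_vbd G hlf (hs D hD).2 (hs D hD).1 (hs C hC).1 hDC)

theorem card_mul_pow_mul_pow_le_one {Δ : ℕ} (hΔ : ∀ x, #(nbr G hlf x) ≤ Δ)
    (s : Finset (Finset V)) {v : V} {p : ℕ}
    (hs : ∀ C ∈ s, v ∈ C ∧ #C = p ∧ (G.induce (C : Set V)).Connected)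
    {q : ℝ} (hq₀ : 0 ≤ q) (hq₁ : q ≤ 1) :
    (#s : ℝ) * (q ^ p * (1 - q) ^ (p * Δ)) ≤ 1 := by
  have hterm : ∀ C ∈ s, q ^ p * (1 - q) ^ (p * Δ) ≤ q ^ #C * (1 - q) ^ #(vbd G hlf C) := by
    intro C hC
    rw [(hs C hC).2.1]
    refine mul_le_mul_of_nonneg_left (pow_le_pow_of_le_one (by linarith) (by linarith) ?_)
      (by positivity)
    simpa [(hs C hC).2.1] using card_vbd_le G hlf hΔ C
  calc (#s : ℝ) * (q ^ p * (1 - q) ^ (p * Δ))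
      ≤ ∑ C ∈ s, q ^ #C * (1 - q) ^ #(vbd G hlf C) := by
        rw [← nsmul_eq_mul]; exact card_nsmul_le_sum _ _ _ hterm
    _ ≤ 1 :=
        sum_pow_mul_pow_vbd_le_one G hlf s (fun C hC => ⟨(hs C hC).1, (hs C hC).2.2⟩) hq₀ hq₁

end Graph

lemma Set.finite_and_ncard_le_of_forall_finset {α : Type*} {S : Set α} {B : ℝ}
    (h : ∀ t : Finset α, ↑t ⊆ S → (#t : ℝ) ≤ B) : S.Finite ∧ (S.ncard : ℝ) ≤ B := by
  have hfin : S.Finite := by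
    by_contra hinf
    obtain ⟨t, htS, ht⟩ := Set.Infinite.exists_subset_card_eq hinf (⌈B⌉₊ + 1)
    have := h t htS
    rw [ht] at this
    push_cast at this
    linarith [Nat.le_ceil B]
  refine ⟨hfin, ?_⟩
  rw [Set.ncard_eq_toFinset_card S hfin]
  exact h _ (by simp)

theorem statement8_general {V : Type*}
    (G : SimpleGraph V) (hlf : G.LocallyFinite)
    (Δ : ℕ) (hΔ : ∀ x : V, (nbr G hlf x).card ≤ Δ)
    (v : V) (p : ℕ) :
    {C : Finset V | v ∈ C ∧ C.card = p ∧ (G.induce (C : Set V)).Connected}.Finite ∧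
      (({C : Finset V | v ∈ C ∧ C.card = p ∧ (G.induce (C : Set V)).Connected}.ncard : ℝ) ≤
        (Real.exp 1 * ((Δ : ℝ) + 1)) ^ p) := by
  refine Set.finite_and_ncard_le_of_forall_finset fun s hs => ?_
  set B := (Real.exp 1 * ((Δ : ℝ) + 1)) ^ p
  set q := 1 / ((Δ : ℝ) + 1)
  have hq₀ : 0 ≤ q := by positivity
  have hq₁ : q ≤ 1 :=
    div_le_one_of_le₀ (by linarith [(Δ.cast_nonneg : (0 : ℝ) ≤ Δ)]) (by positivity)
  have hcount := card_mul_pow_mul_pow_le_one G hlf hΔ s (fun C hC => hs hC) hq₀ hq₁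
  calc (#s : ℝ) ≤ #s * (B * (q ^ p * (1 - q) ^ (p * Δ))) :=
        le_mul_of_one_le_right (Nat.cast_nonneg _) (one_le_exp_one_mul_pow_mul_pow Δ p)
    _ = B * (#s * (q ^ p * (1 - q) ^ (p * Δ))) := by ring
    _ ≤ B := mul_le_of_le_one_right (by positivity) hcount

/-- Kesten's lemma: in a graph of maximal degree at most `Δ`, the
number of connected vertex subsets with exactly `p` vertices containing a fixed
vertex `v` is finite and at most `(e(Δ+1))^p`. -/
theorem statement8 {V : Type*} [DecidableEq V]
    (G : SimpleGraph V) (hlf : G.LocallyFinite)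
    (Δ : ℕ) (hΔ : ∀ x : V, (nbr G hlf x).card ≤ Δ)
    (v : V) (p : ℕ) (hp : 1 ≤ p) :
    {C : Finset V | v ∈ C ∧ C.card = p ∧ (G.induce (C : Set V)).Connected}.Finite ∧
      (({C : Finset V | v ∈ C ∧ C.card = p ∧ (G.induce (C : Set V)).Connected}.ncard : ℝ) ≤
        (Real.exp 1 * ((Δ : ℝ) + 1)) ^ p) :=
  statement8_general G hlf Δ hΔ v p
end
end
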